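/- Let (𝒫, {R}) be a control problem with a single requirement satisfying the CNMS properties, where R = (e needs C), the event e belongs to exactly one plant Pk ∈ 𝒫 (which is an actuator automaton not mentioned in C), every plant mentioned in C is a sensor automaton, C is in disjunctive normal form over state references with at most one reference per plant per conjunct and no negated reference to a single-state plant, and every plant in 𝒫 is strongly connected. Then from any global state q of the composed plant there exists a string s such that the state r reached by s satisfies C. -/

import Mathlib

open scoped Classical

/-- A finite-automaton-style structure: alphabet, partial transition
function, initial state, and marked states. -/
structure Aut (Q E : Type) where
  alph : Set E
  δ : Q → E → Option Q
  q0 : Q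
  Qm : Set Q

namespace Aut

variable {Q Q1 Q2 E : Type}

/-- Extension of the partial transition function to strings. -/
def run (A : Aut Q E) : Q → List E → Option Q
  | q, [] => some q
  | q, e :: s => (A.δ q e).bind fun q' => A.run q' s

/-- Generated language. -/
def Lang (A : Aut Q E) : Set (List E) := {s | (A.run A.q0 s).isSome}

/-- Marked language. -/
def LangM (A : Aut Q E) : Set (List E) := {s | ∃ q ∈ A.Qm, A.run A.q0 s = some q}

def Reachable (A : Aut Q E) (q : Q) : Prop := ∃ s, A.run A.q0 s = some q

def Coreachable (A : Aut Q E) (q : Q) : Prop :=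
  ∃ s q', A.run q s = some q' ∧ q' ∈ A.Qm

def Trim (A : Aut Q E) : Prop := ∀ q, A.Reachable q ∧ A.Coreachable q

def Nonblocking (A : Aut Q E) : Prop := ∀ q, A.Reachable q → A.Coreachable q

def StronglyConnected (A : Aut Q E) : Prop := ∀ q1 q2 : Q, ∃ s, A.run q1 s = some q2

/-- Synchronous composition of two automata. -/
noncomputable def sync (A : Aut Q1 E) (B : Aut Q2 E) : Aut (Q1 × Q2) E where
  alph := A.alph ∪ B.alph
  δ := fun p e =>
    if e ∈ A.alph ∧ e ∈ B.alph then
      match A.δ p.1 e, B.δ p.2 e with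
      | some a, some b => some (a, b)
      | _, _ => none
    else if e ∈ A.alph then (A.δ p.1 e).map (fun a => (a, p.2))
    else if e ∈ B.alph then (B.δ p.2 e).map (fun b => (p.1, b))
    else none
  q0 := (A.q0, B.q0)
  Qm := {p | p.1 ∈ A.Qm ∧ p.2 ∈ B.Qm}

end Aut

namespace Aut

/-- Synchronous composition of a product system (pairwise disjoint alphabets):
the shuffle automaton on the product state space. -/
noncomputable def shuffle {m : ℕ} {Q : Fin m → Type} {E : Type}
    (A : ∀ i, Aut (Q i) E) : Aut (∀ i, Q i) E where
  alph := ⋃ i, (A i).alph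
  δ := fun q e =>
    if h : ∃ i, e ∈ (A i).alph then
      ((A h.choose).δ (q h.choose) e).map fun q' => Function.update q h.choose q'
    else none
  q0 := fun i => (A i).q0
  Qm := {q | ∀ i, q i ∈ (A i).Qm}

end Aut

/-- A literal: a (possibly negated) state reference `P_i.q`. -/
structure Lit (m : ℕ) (Q : Fin m → Type) where
  i : Fin m
  q : Q i
  pos : Bool

/-- Evaluation of a literal at a global state. -/
def Lit.eval {m : ℕ} {Q : Fin m → Type} (l : Lit m Q) (r : ∀ i, Q i) : Prop :=
  if l.pos then r l.i = l.q else r l.i ≠ l.q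

/-- A predicate in disjunctive normal form over state references. -/
abbrev DNF (m : ℕ) (Q : Fin m → Type) := List (List (Lit m Q))

/-- Evaluation of a DNF predicate at a global state. -/
def DNF.eval {m : ℕ} {Q : Fin m → Type} (C : DNF m Q) (r : ∀ i, Q i) : Prop :=
  ∃ conj ∈ C, ∀ l ∈ conj, l.eval r

/-! A product of strongly connected automata over pairwise disjoint alphabets
is strongly connected, because each component can be driven to its target state by its own
events without disturbing the others. It therefore suffices to exhibit one global state
satisfying `C`, and any conjunct is satisfiable: it constrains each plant at most once, and a
negated reference `¬ P.q` can be met because `P` has a state other than `q`. -/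

namespace Aut

theorem run_append {Q E : Type} (A : Aut Q E) (q : Q) (s t : List E) :
    A.run q (s ++ t) = (A.run q s).bind fun q' => A.run q' t := by
  induction s generalizing q with
  | nil => rfl
  | cons e s ih =>
    simp only [List.cons_append, run]
    cases A.δ q e <;> simp [ih]

variable {m : ℕ} {Q : Fin m → Type} {E : Type} (A : ∀ i, Aut (Q i) E)

theorem shuffle_δ_of_mem (hdisj : ∀ i j, i ≠ j → ∀ x, ¬(x ∈ (A i).alph ∧ x ∈ (A j).alph))
    {i : Fin m} {e : E} (he : e ∈ (A i).alph) (q : ∀ j, Q j) :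
    (shuffle A).δ q e = ((A i).δ (q i) e).map (Function.update q i) := by
  have hex : ∃ j, e ∈ (A j).alph := ⟨i, he⟩
  obtain rfl : hex.choose = i :=
    not_not.mp fun hne => hdisj _ _ hne e ⟨hex.choose_spec, he⟩
  exact dif_pos hex

theorem shuffle_run_update (hdisj : ∀ i j, i ≠ j → ∀ x, ¬(x ∈ (A i).alph ∧ x ∈ (A j).alph))
    (hdom : ∀ i q x, (A i).δ q x ≠ none → x ∈ (A i).alph)
    {i : Fin m} {s : List E} {q : ∀ j, Q j} {b : Q i} (h : (A i).run (q i) s = some b) :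
    (shuffle A).run q s = some (Function.update q i b) := by
  induction s generalizing q with
  | nil =>
    obtain rfl : q i = b := Option.some.inj h
    simp [run]
  | cons e s ih =>
    cases hδ : (A i).δ (q i) e with
    | none => simp [run, hδ] at h
    | some a =>
      have he : e ∈ (A i).alph := hdom i (q i) e (by simp [hδ])
      have hrest : (A i).run (Function.update q i a i) s = some b := by
        simpa [run, hδ] using h
      simp [run, shuffle_δ_of_mem A hdisj he, hδ, ih hrest]

theorem shuffle_stronglyConnected
    (hdisj : ∀ i j, i ≠ j → ∀ x, ¬(x ∈ (A i).alph ∧ x ∈ (A j).alph))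
    (hdom : ∀ i q x, (A i).δ q x ≠ none → x ∈ (A i).alph)
    (hsc : ∀ i, (A i).StronglyConnected) :
    (shuffle A).StronglyConnected := by
  intro q1 q2
  suffices ∀ S : Finset (Fin m), ∃ s, (shuffle A).run q1 s = some (S.piecewise q2 q1) by
    simpa using this Finset.univ
  intro S
  induction S using Finset.induction_on with
  | empty => exact ⟨[], by simp [run]⟩
  | insert j S _ ih =>
    obtain ⟨s, hs⟩ := ih
    obtain ⟨t, ht⟩ := hsc j (S.piecewise q2 q1 j) (q2 j)
    refine ⟨s ++ t, ?_⟩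
    rw [run_append, hs, Option.bind_some, shuffle_run_update A hdisj hdom ht,
      Finset.piecewise_insert]

end Aut

namespace Lit

variable {m : ℕ} {Q : Fin m → Type}

theorem eval_update_of_ne (l : Lit m Q) {j : Fin m} (h : l.i ≠ j) (r : ∀ i, Q i) (t : Q j) :
    l.eval (Function.update r j t) ↔ l.eval r := by
  simp [eval, Function.update_of_ne h]

theorem exists_eval_update (l : Lit m Q) (hneg : l.pos = false → ∃ a b : Q l.i, a ≠ b) :
    ∃ t : Q l.i, ∀ r, l.eval (Function.update r l.i t) := by
  cases hp : l.pos with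
  | true => exact ⟨l.q, by simp [eval, hp]⟩
  | false =>
    obtain ⟨a, b, hab⟩ := hneg hp
    by_cases ha : a = l.q
    · exact ⟨b, by simp [eval, hp, ← ha, hab.symm]⟩
    · exact ⟨a, by simp [eval, hp, ha]⟩

theorem exists_forall_eval (conj : List (Lit m Q))
    (honce : ∀ l1 ∈ conj, ∀ l2 ∈ conj, l1.i = l2.i → l1 = l2)
    (hneg : ∀ l ∈ conj, l.pos = false → ∃ a b : Q l.i, a ≠ b) (r₀ : ∀ i, Q i) :
    ∃ r : ∀ i, Q i, ∀ l ∈ conj, l.eval r := by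
  induction conj with
  | nil => exact ⟨r₀, by simp⟩
  | cons l conj ih =>
    obtain ⟨r, hr⟩ := ih (fun l1 h1 l2 h2 => honce l1 (.tail _ h1) l2 (.tail _ h2))
      (fun l' h' => hneg l' (.tail _ h'))
    obtain ⟨t, ht⟩ := l.exists_eval_update (hneg l List.mem_cons_self)
    refine ⟨Function.update r l.i t, ?_⟩
    intro l' hl'
    by_cases hi : l'.i = l.i
    · obtain rfl := honce l' hl' l List.mem_cons_self hi
      exact ht r
    · rcases List.mem_cons.mp hl' with rfl | hmem
      · exact absurd rfl hi
      · exact (l'.eval_update_of_ne hi r t).mpr (hr l' hmem)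

end Lit

theorem DNF.exists_eval {m : ℕ} {Q : Fin m → Type} (C : DNF m Q) (hCne : C ≠ [])
    (honce : ∀ conj ∈ C, ∀ l1 ∈ conj, ∀ l2 ∈ conj, l1.i = l2.i → l1 = l2)
    (hneg : ∀ conj ∈ C, ∀ l ∈ conj, l.pos = false → ∃ a b : Q l.i, a ≠ b)
    (r₀ : ∀ i, Q i) : ∃ r, C.eval r := by
  obtain ⟨conj, hconj⟩ := List.exists_mem_of_ne_nil C hCne
  obtain ⟨r, hr⟩ := Lit.exists_forall_eval conj (honce conj hconj) (hneg conj hconj) r₀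
  exact ⟨r, conj, hconj, hr⟩

theorem cnms_condition_satisfiable_general {m : ℕ} {Q : Fin m → Type} {E : Type}
    (A : ∀ i, Aut (Q i) E)
    (hdisj : ∀ i j, i ≠ j → ∀ x, ¬(x ∈ (A i).alph ∧ x ∈ (A j).alph))
    (hdom : ∀ i q x, (A i).δ q x ≠ none → x ∈ (A i).alph)
    (hsc : ∀ i, (A i).StronglyConnected)
    (C : DNF m Q)
    (honce : ∀ conj ∈ C, ∀ l1 ∈ conj, ∀ l2 ∈ conj, l1.i = l2.i → l1 = l2)
    (hneg : ∀ conj ∈ C, ∀ l ∈ conj, l.pos = false → ∃ a b : Q l.i, a ≠ b)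
    (hCne : C ≠ []) :
    ∀ qg : ∀ i, Q i, ∃ (s : List E) (r : ∀ i, Q i),
      (Aut.shuffle A).run qg s = some r ∧ C.eval r := by
  intro qg
  obtain ⟨r, hr⟩ := C.exists_eval hCne honce hneg qg
  obtain ⟨s, hs⟩ := Aut.shuffle_stronglyConnected A hdisj hdom hsc qg r
  exact ⟨s, r, hs, hr⟩

/-- for a CNMS control problem with a single requirement
`e needs C`, from any global state of the composed plant some string reaches
a state satisfying `C`. -/
theorem cnms_condition_satisfiable {m : ℕ} {Q : Fin m → Type} {E : Type}
    (A : ∀ i, Aut (Q i) E) (Sc Su : Set E)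
    (hpart : ∀ x : E, ¬(x ∈ Sc ∧ x ∈ Su))
    (hdisj : ∀ i j, i ≠ j → ∀ x, ¬(x ∈ (A i).alph ∧ x ∈ (A j).alph))
    (hdom : ∀ i q x, (A i).δ q x ≠ none → x ∈ (A i).alph)
    (hsc : ∀ i, (A i).StronglyConnected)
    (hmk : ∀ i, ∃ q, q ∈ (A i).Qm)
    (e : E) (C : DNF m Q) (k : Fin m)
    (he : e ∈ (A k).alph) (hec : e ∈ Sc)
    (hact : (A k).alph ⊆ Sc)
    (hnok : ∀ conj ∈ C, ∀ l ∈ conj, l.i ≠ k)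
    (hsens : ∀ conj ∈ C, ∀ l ∈ conj, (A l.i).alph ⊆ Su)
    (honce : ∀ conj ∈ C, ∀ l1 ∈ conj, ∀ l2 ∈ conj, l1.i = l2.i → l1 = l2)
    (hneg : ∀ conj ∈ C, ∀ l ∈ conj, l.pos = false → ∃ a b : Q l.i, a ≠ b)
    (hCne : C ≠ []) :
    ∀ qg : ∀ i, Q i, ∃ (s : List E) (r : ∀ i, Q i),
      (Aut.shuffle A).run qg s = some r ∧ C.eval r :=
  cnms_condition_satisfiable_general A hdisj hdom hsc C honce hneg hCne
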